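/- Let k be a field of characteristic p > 0, n ≥ 1, A an n×n matrix over k[[z]], and Ψ an n×n matrix over k[[z]] with D_A^p(v) = Ψ·v for all v ∈ k[[z]]^n. Then for every f ∈ k[[z]], the operator D_{A + f·1} (the connection twisted by the scalar one-form f dz) satisfies D_{A + f·1}^p(v) = (Ψ + (f^p + f^{(p−1)})·1)·v for all v ∈ k[[z]]^n, where 1 is the identity matrix and f^{(p−1)} is the (p−1)-st iterated formal derivative of f. (This is the local additivity of p-curvature under twisting by a rank-one connection, underlying the paper's Lemma 3.8 ('J to G') and the additivity h_p(E₁ ⊗ E₂) = h_p(E₁) + h_p(E₂) in the commutative case.) -/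

import Mathlib

open PowerSeries

/-- The formal derivative `d/dz` on `k⟦z⟧`. -/
noncomputable def pd (k : Type*) [CommRing k] (f : PowerSeries k) : PowerSeries k :=
  PowerSeries.derivative k f

/-- The connection operator `D_A = d/dz + A` acting on `k⟦z⟧ⁿ`: `D_A(v) = v′ + A·v`. -/
noncomputable def connOp (k : Type*) [CommRing k] {n : ℕ}
    (A : Matrix (Fin n) (Fin n) (PowerSeries k)) :
    (Fin n → PowerSeries k) → (Fin n → PowerSeries k) :=
  fun v => (fun i => pd k (v i)) + A.mulVec v

open Finset Polynomial

/-!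
Over `k⟦z⟧ⁿ` write `D_{A + f·1} = x + y` with `x = D_A` and `y` multiplication by `f`. Then
`[x, g] = g′` for multiplication by any `g`, so the iterated commutators `ad_x^j y` are the
multiplications by `f^{(j)}`, which commute with `y`. In this situation Jacobson's formula
collapses to `(x + y)^p = x^p + y^p + ad_x^{p-1} y`. To prove it, put `T = x + t·y` in `E[t]`:
the `t`-derivative of `T^p` is `∑_{i+j=p-1} T^i y T^j = ∑_j C(p, j+1) (ad_x^j y) T^{p-1-j}`,
which in characteristic `p` is the constant `ad_x^{p-1} y`. Hence the coefficients of
`t^2, …, t^{p-1}` in `T^p` vanish, and evaluating at `t = 1` leaves `x^p + y^p + ad_x^{p-1} y`.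
-/

section Jacobson

variable {E : Type*} [Ring E]

section Commutator

variable {x : E} {d : ℕ → E}

theorem pow_mul_eq_sum_antidiagonal_choose (hxd : ∀ j, x * d j = d j * x + d (j + 1)) (m : ℕ) :
    x ^ m * d 0 = ∑ ij ∈ antidiagonal m, m.choose ij.1 • (d ij.1 * x ^ ij.2) := by
  induction m with
  | zero => simp
  | succ m ih =>
    rw [sum_antidiagonal_choose_succ_nsmul (fun i j => d i * x ^ j), pow_succ', mul_assoc, ih,
      mul_sum, ← sum_add_distrib]
    refine sum_congr rfl fun ij hij => ?_
    rw [HasAntidiagonal.mem_antidiagonal] at hij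
    rw [mul_smul_comm, ← mul_assoc, hxd, add_mul, mul_assoc, ← pow_succ', smul_add,
      Nat.choose_symm_of_eq_add hij.symm]

theorem sum_antidiagonal_pow_mul_mul_pow (hxd : ∀ j, x * d j = d j * x + d (j + 1)) (m : ℕ) :
    ∑ ij ∈ antidiagonal m, x ^ ij.1 * d 0 * x ^ ij.2 =
      ∑ ij ∈ antidiagonal m, (m + 1).choose (ij.1 + 1) • (d ij.1 * x ^ ij.2) := by
  induction m with
  | zero => simp
  | succ m ih =>
    have hpascal : ∀ ij ∈ antidiagonal (m + 1), (m + 2).choose (ij.1 + 1) • (d ij.1 * x ^ ij.2) =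
        (m + 1).choose ij.1 • (d ij.1 * x ^ ij.2) +
          (m + 1).choose (ij.1 + 1) • (d ij.1 * x ^ ij.2) :=
      fun ij _ => by rw [Nat.choose_succ_succ', add_nsmul]
    rw [sum_congr rfl hpascal, sum_add_distrib, ← pow_mul_eq_sum_antidiagonal_choose hxd,
      Nat.sum_antidiagonal_succ', Nat.sum_antidiagonal_succ',
      Nat.choose_eq_zero_of_lt (Nat.lt_succ_self _), zero_smul, zero_add, pow_zero, mul_one]
    simp only [pow_succ, ← mul_assoc, ← smul_mul_assoc, ← sum_mul, ih]

theorem sum_antidiagonal_pow_mul_mul_pow_of_charP (k : Type*) [Field k] {p : ℕ} [Fact p.Prime]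
    [CharP k p] [Algebra k E] (hxd : ∀ j, x * d j = d j * x + d (j + 1)) :
    ∑ ij ∈ antidiagonal (p - 1), x ^ ij.1 * d 0 * x ^ ij.2 = d (p - 1) := by
  have hp := (Fact.out : p.Prime)
  rw [sum_antidiagonal_pow_mul_mul_pow hxd, Nat.sub_add_cancel hp.one_le,
    sum_eq_single (p - 1, 0)]
  · simp [Nat.sub_add_cancel hp.one_le]
  · rintro ⟨i, j⟩ hij hne
    rw [HasAntidiagonal.mem_antidiagonal] at hij
    have hdvd : p ∣ p.choose (i + 1) := hp.dvd_choose_self (by omega) (by grind)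
    rw [← Nat.cast_smul_eq_nsmul k, (CharP.cast_eq_zero_iff k p _).mpr hdvd, zero_smul]
  · simp

end Commutator

theorem Polynomial.derivative_pow_succ_eq_sum (P : E[X]) (m : ℕ) :
    derivative (P ^ (m + 1)) = ∑ ij ∈ antidiagonal m, P ^ ij.1 * derivative P * P ^ ij.2 := by
  induction m with
  | zero => simp
  | succ m ih =>
    rw [pow_succ, derivative_mul, ih, Nat.sum_antidiagonal_succ', sum_mul, pow_zero, mul_one,
      add_comm]
    simp only [pow_succ, mul_assoc]

theorem Polynomial.coeff_eq_zero_of_derivative_eq_C (k : Type*) [Field k] {p : ℕ} [CharP k p]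
    [Algebra k E] {P : E[X]} {c : E} (hP : derivative P = C c) {i : ℕ} (hi : 1 < i)
    (hip : i < p) : P.coeff i = 0 := by
  obtain ⟨j, rfl⟩ : ∃ j, i = j + 1 := ⟨i - 1, by omega⟩
  have hj : ((j + 1 : ℕ) : k) ≠ 0 := by
    rw [Ne, CharP.cast_eq_zero_iff k p]
    exact fun h => absurd (Nat.le_of_dvd (Nat.succ_pos j) h) (by omega)
  have h := coeff_derivative P j
  rw [hP, coeff_C, if_neg (by omega), ← Nat.cast_succ, ← map_natCast (algebraMap k E),
    ← Algebra.commutes, ← Algebra.smul_def] at h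
  exact (smul_eq_zero.mp h.symm).resolve_left hj

theorem Polynomial.eval_one_eq_of_derivative_eq_C (k : Type*) [Field k] {p : ℕ} [Fact p.Prime]
    [CharP k p] [Algebra k E] {P : E[X]} {c : E} (hdeg : P.natDegree ≤ p)
    (hP : derivative P = C c) : P.eval 1 = P.coeff 0 + c + P.coeff p := by
  have hc : P.coeff 1 = c := by simpa [hP] using (coeff_derivative P 0).symm
  obtain ⟨q, rfl⟩ : ∃ q, p = q + 2 := ⟨p - 2, by have := (Fact.out : p.Prime).two_le; omega⟩
  rw [eval_eq_sum_range' (Nat.lt_succ_of_le hdeg), sum_range_succ, sum_range_succ',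
    sum_range_succ', sum_eq_zero fun i hi => ?_]
  · simp [hc, add_comm]
  · rw [coeff_eq_zero_of_derivative_eq_C k hP (by omega) (by grind), zero_mul]

theorem add_pow_char_of_commute_ad_iterate (k : Type*) [Field k] {p : ℕ} [Fact p.Prime]
    [CharP k p] [Algebra k E] {x y : E} {d : ℕ → E} (hd0 : d 0 = y)
    (hxd : ∀ j, x * d j = d j * x + d (j + 1)) (hyd : ∀ j, Commute y (d j)) :
    (x + y) ^ p = x ^ p + y ^ p + d (p - 1) := by
  have hp := (Fact.out : p.Prime)
  set T : E[X] := Polynomial.C y * Polynomial.X + Polynomial.C x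
  have hTd : ∀ j, T * Polynomial.C (d j) =
      Polynomial.C (d j) * T + Polynomial.C (d (j + 1)) := fun j => by
    simp only [T, add_mul, mul_add, mul_assoc, X_mul_C, ← C_mul, hxd, C_add]
    simp only [← mul_assoc, ← C_mul, (hyd j).eq]
    abel
  have hderiv : Polynomial.derivative (T ^ p) = Polynomial.C (d (p - 1)) := by
    rw [← Nat.sub_add_cancel hp.one_le, derivative_pow_succ_eq_sum, Nat.add_sub_cancel]
    simpa [T, hd0] using
      sum_antidiagonal_pow_mul_mul_pow_of_charP k (d := fun j => Polynomial.C (d j)) hTd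
  have hdeg : (T ^ p).natDegree ≤ p := by
    simpa using natDegree_pow_le_of_le p (natDegree_linear_le (a := y) (b := x))
  have htop : (T ^ p).coeff p = y ^ p := by
    simpa [T] using coeff_pow_of_natDegree_le (m := p) (natDegree_linear_le (a := y) (b := x))
  let ev : E[X] →+* E := eval₂RingHom' (RingHom.id E) 1 fun a => Commute.one_right a
  calc (x + y) ^ p = ev (T ^ p) := by rw [map_pow]; simp [ev, T, add_comm]
    _ = (T ^ p).coeff 0 + d (p - 1) + (T ^ p).coeff p :=
      eval_one_eq_of_derivative_eq_C k hdeg hderiv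
    _ = x ^ p + y ^ p + d (p - 1) := by
      rw [add_right_comm, htop, ← constantCoeff_apply, map_pow]
      simp [T]

end Jacobson

section Connection

variable {k : Type*} [CommRing k] {n : ℕ}

noncomputable def connEnd (A : Matrix (Fin n) (Fin n) (PowerSeries k)) :
    Module.End k (Fin n → PowerSeries k) :=
  LinearMap.pi (fun i => (PowerSeries.derivative k).toLinearMap ∘ₗ LinearMap.proj i) +
    (Matrix.mulVecLin A).restrictScalars k

theorem coe_connEnd (A : Matrix (Fin n) (Fin n) (PowerSeries k)) :
    ⇑(connEnd A) = connOp k A :=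
  rfl

theorem connEnd_mul_toModuleEnd (A : Matrix (Fin n) (Fin n) (PowerSeries k)) (g : PowerSeries k) :
    connEnd A * Module.toModuleEnd k (Fin n → PowerSeries k) g =
      Module.toModuleEnd k _ g * connEnd A + Module.toModuleEnd k _ (pd k g) := by
  refine LinearMap.ext fun v => funext fun i => ?_
  simp only [Module.toModuleEnd_apply, Module.End.mul_apply, DistribSMul.toLinearMap_apply,
    LinearMap.add_apply, coe_connEnd, connOp, pd, Pi.add_apply, Pi.smul_apply, smul_eq_mul,
    Derivation.leibniz, Matrix.mulVec_smul, smul_add]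
  ring

theorem connOp_add_smul_one (A : Matrix (Fin n) (Fin n) (PowerSeries k)) (f : PowerSeries k) :
    connOp k (A + f • 1) = ⇑(connEnd A + Module.toModuleEnd k (Fin n → PowerSeries k) f) := by
  ext v : 1
  simp only [connOp, Matrix.add_mulVec, Matrix.smul_mulVec, Matrix.one_mulVec, add_assoc,
    Module.toModuleEnd_apply, LinearMap.add_apply, coe_connEnd, DistribSMul.toLinearMap_apply]

end Connection

theorem pCurvature_twist_general (k : Type*) [Field k] (p : ℕ) [Fact p.Prime] [CharP k p]
    (n : ℕ) (A Ψ : Matrix (Fin n) (Fin n) (PowerSeries k))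
    (hΨ : ∀ v : Fin n → PowerSeries k, (connOp k A)^[p] v = Ψ.mulVec v)
    (f : PowerSeries k) :
    ∀ v : Fin n → PowerSeries k,
      (connOp k (A + f • (1 : Matrix (Fin n) (Fin n) (PowerSeries k))))^[p] v =
        (Ψ + (f ^ p + (pd k)^[p - 1] f) • (1 : Matrix (Fin n) (Fin n) (PowerSeries k))).mulVec v := by
  intro v
  set μ : PowerSeries k →+* Module.End k (Fin n → PowerSeries k) := Module.toModuleEnd k _
  have hjacobson :
      (connEnd A + μ f) ^ p = connEnd A ^ p + μ (f ^ p) + μ ((pd k)^[p - 1] f) := by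
    rw [map_pow]
    refine add_pow_char_of_commute_ad_iterate k (d := fun j => μ ((pd k)^[j] f)) rfl
      (fun j => ?_) fun j => (Commute.all _ _).map μ
    rw [Function.iterate_succ_apply']
    exact connEnd_mul_toModuleEnd A _
  rw [connOp_add_smul_one, ← Module.End.pow_apply, hjacobson, LinearMap.add_apply,
    LinearMap.add_apply, Module.End.pow_apply, coe_connEnd, hΨ, Matrix.add_mulVec,
    Matrix.smul_mulVec, Matrix.one_mulVec, add_smul, add_assoc]
  rfl

/-- **Additivity of `p`-curvature under a rank-one twist.** If `D_A^p(v) = Ψ·v` for all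
`v`, then for any `f ∈ k⟦z⟧` the twisted connection `d/dz + (A + f·1)` has `p`-curvature
matrix `Ψ + (f^p + f^{(p−1)})·1`. -/
theorem pCurvature_twist (k : Type*) [Field k] (p : ℕ) [Fact p.Prime] [CharP k p]
    (n : ℕ) (hn : 1 ≤ n) (A Ψ : Matrix (Fin n) (Fin n) (PowerSeries k))
    (hΨ : ∀ v : Fin n → PowerSeries k, (connOp k A)^[p] v = Ψ.mulVec v)
    (f : PowerSeries k) :
    ∀ v : Fin n → PowerSeries k,
      (connOp k (A + f • (1 : Matrix (Fin n) (Fin n) (PowerSeries k))))^[p] v =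
        (Ψ + (f ^ p + (pd k)^[p - 1] f) • (1 : Matrix (Fin n) (Fin n) (PowerSeries k))).mulVec v :=
  pCurvature_twist_general k p n A Ψ hΨ f
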